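/- arXiv:2402.15807 — 2 statements merged into one kernel-verified Lean document; each statement's English description precedes it below -/
import Mathlib

section
/- Let g be a non-perfect Lie algebra over K (char 0), t ∈ K with t ≠ 0, t ≠ 1, and fix a complementary subspace a with g = a ⊕ ⁅g,g⁆. If D is a (t,1,0)-derivation of g, then the linear map D̂ defined by D̂ = (1/t)·D on a and D̂ = D on ⁅g,g⁆ is a (1,1,0)-derivation of g, i.e., an element of the centroid: D̂⁅X,Y⁆ = ⁅D̂X,Y⁆ for all X,Y. Consequently D(t,1,0)(g) embeds linearly into the centroid of g. -/
section Defs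
variable (K L : Type*) [Field K] [LieRing L] [LieAlgebra K L]

/-- The space of (t,1,0)-derivations of a Lie algebra. -/
def lieDerivSpace (t : K) : Submodule K (L →ₗ[K] L) where
  carrier := {D | ∀ X Y : L, t • D ⁅X, Y⁆ = ⁅D X, Y⁆}
  add_mem' := by
    intro a b ha hb X Y
    simp only [LinearMap.add_apply, smul_add, ha X Y, hb X Y, add_lie]
  zero_mem' := by intro X Y; simp
  smul_mem' := by
    intro c a ha X Y
    simp only [LinearMap.smul_apply, smul_comm t c, ha X Y, smul_lie]

/-- The center of a Lie algebra, as a submodule. -/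
def lieCenterSub : Submodule K L where
  carrier := {X | ∀ Y : L, ⁅X, Y⁆ = 0}
  add_mem' := by intro a b ha hb Y; simp [add_lie, ha Y, hb Y]
  zero_mem' := by intro Y; simp
  smul_mem' := by intro c a ha Y; simp [smul_lie, ha Y]

/-- The derived subalgebra, as a submodule. -/
def lieDerivedSub : Submodule K L :=
  Submodule.span K {z | ∃ X Y : L, ⁅X, Y⁆ = z}

/-- The space Ω(g) of linear maps with image in the center and killing the derived subalgebra. -/
def lieOmega : Submodule K (L →ₗ[K] L) where
  carrier := {T | (∀ x y : L, ⁅T x, y⁆ = 0) ∧ ∀ x ∈ lieDerivedSub K L, T x = 0}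
  add_mem' := by
    intro a b ha hb
    refine ⟨fun x y => ?_, fun x hx => ?_⟩
    · simp [add_lie, ha.1 x y, hb.1 x y]
    · simp [ha.2 x hx, hb.2 x hx]
  zero_mem' := ⟨by simp, by simp⟩
  smul_mem' := by
    intro c a ha
    refine ⟨fun x y => ?_, fun x hx => ?_⟩
    · simp [smul_lie, ha.1 x y]
    · simp [ha.2 x hx]

end Defs


/-!
Applying a `(t,1,0)`-derivation `D` to the Jacobi identity gives
`t² • D ⁅X, ⁅Y, Z⁆⁆ = t • D ⁅X, ⁅Y, Z⁆⁆`, so for `t ≠ 0, 1` the map `D` kills `⁅g, ⁅g, g⁆⁆`, and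
then `t • D ⁅z, Y⁆ = ⁅D z, Y⁆` shows that `D` maps `⁅g, g⁆` into the centre. Hence `⁅D X, Y⁆`
only sees the `a`-component of `X`, and rescaling `D` by `t⁻¹` on `a` turns
`t • D ⁅X, Y⁆ = ⁅D X, Y⁆` into `D̂ ⁅X, Y⁆ = ⁅D̂ X, Y⁆`. Finally `D̂ = D ∘ S` for the invertible map
`S` that is `t⁻¹` on `a` and the identity on `⁅g, g⁆`, so `D ↦ D̂` is linear and injective.
-/

section
variable {K L : Type*} [Field K] [LieRing L] [LieAlgebra K L]

theorem lie_mem_lieDerivedSub (X Y : L) : ⁅X, Y⁆ ∈ lieDerivedSub K L :=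
  Submodule.subset_span ⟨X, Y, rfl⟩

theorem lie_lie_eq_lie_add_lie_lie (X Y Z : L) : ⁅⁅X, Y⁆, Z⁆ = ⁅X, ⁅Y, Z⁆⁆ + ⁅⁅X, Z⁆, Y⁆ := by
  rw [lie_lie, ← lie_skew Y ⁅X, Z⁆, sub_neg_eq_add]

variable {t : K} {D : L →ₗ[K] L}

theorem apply_lie_lie_eq_zero_of_mem_lieDerivSpace (ht0 : t ≠ 0) (ht1 : t ≠ 1)
    (hD : D ∈ lieDerivSpace K L t) (X Y Z : L) : D ⁅X, ⁅Y, Z⁆⁆ = 0 := by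
  have hD₂ : ∀ A B C : L, t • t • D ⁅⁅A, B⁆, C⁆ = ⁅⁅D A, B⁆, C⁆ := fun A B C => by
    rw [hD, ← smul_lie, hD]
  have key : t • t • D ⁅X, ⁅Y, Z⁆⁆ + t • t • D ⁅⁅X, Z⁆, Y⁆
      = t • D ⁅X, ⁅Y, Z⁆⁆ + t • t • D ⁅⁅X, Z⁆, Y⁆ :=
    calc _ = t • t • D ⁅⁅X, Y⁆, Z⁆ := by
            rw [lie_lie_eq_lie_add_lie_lie X Y Z, map_add, smul_add, smul_add]
      _ = ⁅⁅D X, Y⁆, Z⁆ := hD₂ X Y Z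
      _ = ⁅D X, ⁅Y, Z⁆⁆ + ⁅⁅D X, Z⁆, Y⁆ := lie_lie_eq_lie_add_lie_lie _ _ _
      _ = _ := by rw [hD, hD₂]
  have hsmul : (t * (t - 1)) • D ⁅X, ⁅Y, Z⁆⁆ = 0 := by
    rw [mul_sub, mul_one, sub_smul, mul_smul, add_right_cancel key, sub_self]
  exact (smul_eq_zero.mp hsmul).resolve_left (mul_ne_zero ht0 (sub_ne_zero.mpr ht1))

theorem apply_mem_lieCenterSub_of_mem_lieDerivSpace (ht0 : t ≠ 0) (ht1 : t ≠ 1)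
    (hD : D ∈ lieDerivSpace K L t) {z : L} (hz : z ∈ lieDerivedSub K L) :
    D z ∈ lieCenterSub K L := by
  induction hz using Submodule.span_induction with
  | mem x hx =>
    obtain ⟨X, Y, rfl⟩ := hx
    intro Z
    rw [← hD, ← lie_skew, map_neg, apply_lie_lie_eq_zero_of_mem_lieDerivSpace ht0 ht1 hD,
      neg_zero, smul_zero]
  | zero => rw [map_zero]; exact zero_mem _
  | add x y _ _ hx hy => rw [map_add]; exact add_mem hx hy
  | smul c x _ hx => rw [map_smul]; exact Submodule.smul_mem _ c hx

theorem apply_lie_eq_lie_apply_of_isCompl (ht0 : t ≠ 0) (ht1 : t ≠ 1)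
    (hD : D ∈ lieDerivSpace K L t) {a : Submodule K L} (ha : IsCompl a (lieDerivedSub K L))
    {Dhat : L →ₗ[K] L} (hDhat_a : ∀ x ∈ a, Dhat x = t⁻¹ • D x)
    (hDhat_derived : ∀ x ∈ lieDerivedSub K L, Dhat x = D x) (X Y : L) :
    Dhat ⁅X, Y⁆ = ⁅Dhat X, Y⁆ := by
  obtain ⟨p, q, hp, hq, rfl⟩ := Submodule.codisjoint_iff_exists_add_eq.mp ha.codisjoint X
  have hDq : ⁅D q, Y⁆ = 0 := apply_mem_lieCenterSub_of_mem_lieDerivSpace ht0 ht1 hD hq Y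
  rw [hDhat_derived _ (lie_mem_lieDerivedSub _ _), (eq_inv_smul_iff₀ ht0).mpr (hD _ _), map_add,
    map_add, hDhat_a p hp, hDhat_derived q hq, add_lie, add_lie, smul_lie, hDq, add_zero, add_zero]

namespace LinearMap

variable {M : Type*} [AddCommGroup M] [Module K M] {p q : Submodule K M}

theorem ofIsCompl_smul_subtype_apply_of_mem_left (h : IsCompl p q) (c : K) {x : M} (hx : x ∈ p) :
    ofIsCompl h (c • p.subtype) q.subtype x = c • x :=
  ofIsCompl_apply_left h ⟨x, hx⟩

theorem ofIsCompl_smul_subtype_apply_of_mem_right (h : IsCompl p q) (c : K) {x : M}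
    (hx : x ∈ q) : ofIsCompl h (c • p.subtype) q.subtype x = x :=
  ofIsCompl_apply_right h ⟨x, hx⟩

theorem ofIsCompl_smul_subtype_surjective (h : IsCompl p q) {c : K} (hc : c ≠ 0) :
    Function.Surjective (ofIsCompl h (c • p.subtype) q.subtype) := by
  rw [← range_eq_top, eq_top_iff, ← h.sup_eq_top, sup_le_iff]
  constructor
  · intro x hx
    refine ⟨c⁻¹ • x, ?_⟩
    rw [ofIsCompl_smul_subtype_apply_of_mem_left h c (p.smul_mem _ hx), smul_inv_smul₀ hc]
  · intro x hx
    exact ⟨x, ofIsCompl_smul_subtype_apply_of_mem_right h c hx⟩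

end LinearMap

end

theorem stmt_8_general {K L : Type*} [Field K] [LieRing L] [LieAlgebra K L]
    (t : K) (ht0 : t ≠ 0) (ht1 : t ≠ 1)
    (a : Submodule K L) (ha : IsCompl a (lieDerivedSub K L)) :
    (∀ D ∈ lieDerivSpace K L t, ∀ Dhat : L →ₗ[K] L,
        (∀ x ∈ a, Dhat x = t⁻¹ • D x) →
        (∀ x ∈ lieDerivedSub K L, Dhat x = D x) →
        ∀ X Y : L, Dhat ⁅X, Y⁆ = ⁅Dhat X, Y⁆) ∧
      ∃ φ : lieDerivSpace K L t →ₗ[K] lieDerivSpace K L 1, Function.Injective φ := by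
  refine ⟨fun D hD _ => apply_lie_eq_lie_apply_of_isCompl ht0 ht1 hD ha, ?_⟩
  set S := LinearMap.ofIsCompl ha (t⁻¹ • a.subtype) (lieDerivedSub K L).subtype
  have hS : ∀ D ∈ lieDerivSpace K L t, D ∘ₗ S ∈ lieDerivSpace K L 1 := fun D hD X Y => by
    rw [one_smul]
    refine apply_lie_eq_lie_apply_of_isCompl ht0 ht1 hD ha (fun x hx => ?_) (fun x hx => ?_) X Y
    · rw [LinearMap.comp_apply, LinearMap.ofIsCompl_smul_subtype_apply_of_mem_left ha _ hx,
        map_smul]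
    · rw [LinearMap.comp_apply, LinearMap.ofIsCompl_smul_subtype_apply_of_mem_right ha _ hx]
  refine ⟨(LinearMap.lcomp K L S).restrict hS, fun D E hDE => Subtype.ext ?_⟩
  exact (LinearMap.cancel_right (LinearMap.ofIsCompl_smul_subtype_surjective ha
    (inv_ne_zero ht0))).mp (congrArg Subtype.val hDE)

theorem stmt_8 {K L : Type*} [Field K] [CharZero K] [LieRing L] [LieAlgebra K L]
    (hnonperfect : lieDerivedSub K L ≠ ⊤)
    (t : K) (ht0 : t ≠ 0) (ht1 : t ≠ 1)
    (a : Submodule K L) (ha : IsCompl a (lieDerivedSub K L)) :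
    (∀ D ∈ lieDerivSpace K L t, ∀ Dhat : L →ₗ[K] L,
        (∀ x ∈ a, Dhat x = t⁻¹ • D x) →
        (∀ x ∈ lieDerivedSub K L, Dhat x = D x) →
        ∀ X Y : L, Dhat ⁅X, Y⁆ = ⁅Dhat X, Y⁆) ∧
      ∃ φ : lieDerivSpace K L t →ₗ[K] lieDerivSpace K L 1, Function.Injective φ :=
  stmt_8_general t ht0 ht1 a ha
end

section
/- Let K have characteristic zero and t ∈ K with t ≠ 0, t ≠ 1. Let g = h₃(K) be the Heisenberg Lie algebra (basis e₁,e₂,e₃, ⁅e₁,e₂⁆ = e₃). Then the linear map D defined by D e₁ = t·e₁, D e₂ = t·e₂, D e₃ = e₃ is a (t,1,0)-derivation of g that does not belong to Ω(g); hence dim D(t,1,0)(g) = dim Ω(g) + dim Hom(⁅g,g⁆, Z(g) ∩ ⁅g,g⁆) (the upper bound of the dimension estimate is attained). -/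
section Defs
variable {K V : Type*} [Field K] [AddCommGroup V] [Module K V]

/-- The space of (t,1,0)-derivations of an algebra with product μ. -/
def derivSpace (μ : V →ₗ[K] V →ₗ[K] V) (t : K) : Submodule K (V →ₗ[K] V) where
  carrier := {D | ∀ X Y : V, t • D (μ X Y) = μ (D X) Y}
  add_mem' := by
    intro a b ha hb X Y
    simp only [LinearMap.add_apply, smul_add, ha X Y, hb X Y, map_add, LinearMap.add_apply]
  zero_mem' := by intro X Y; simp
  smul_mem' := by
    intro c a ha X Y
    simp only [LinearMap.smul_apply, map_smul, LinearMap.smul_apply, smul_comm t c, ha X Y]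

/-- The center of the algebra, as a submodule. -/
def centerSub (μ : V →ₗ[K] V →ₗ[K] V) : Submodule K V where
  carrier := {X | ∀ Y : V, μ X Y = 0}
  add_mem' := by intro a b ha hb Y; simp [ha Y, hb Y]
  zero_mem' := by intro Y; simp
  smul_mem' := by intro c a ha Y; simp [ha Y]

/-- The derived subalgebra (span of all products), as a submodule. -/
def derivedSub (μ : V →ₗ[K] V →ₗ[K] V) : Submodule K V :=
  Submodule.span K {z | ∃ X Y : V, μ X Y = z}

/-- The space Ω of linear maps with image in the center killing the derived subalgebra. -/
def omegaSub (μ : V →ₗ[K] V →ₗ[K] V) : Submodule K (V →ₗ[K] V) where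
  carrier := {T | (∀ x y : V, μ (T x) y = 0) ∧ ∀ x ∈ derivedSub μ, T x = 0}
  add_mem' := by
    intro a b ha hb
    refine ⟨fun x y => ?_, fun x hx => ?_⟩
    · simp [ha.1 x y, hb.1 x y]
    · simp [ha.2 x hx, hb.2 x hx]
  zero_mem' := ⟨by simp, by simp⟩
  smul_mem' := by
    intro c a ha
    refine ⟨fun x y => ?_, fun x hx => ?_⟩
    · simp [ha.1 x y]
    · simp [ha.2 x hx]

end Defs

/-!
In the basis e₁, e₂, e₃ the bracket is ⁅X, Y⁆ = (X₁Y₂ − X₂Y₁) e₃, so ⁅g, g⁆ = K e₃ ⊆ Z(g) and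
Hom(⁅g, g⁆, Z(g) ∩ ⁅g, g⁆) is one-dimensional. Evaluating the (t,1,0)-derivation identity on pairs of
basis vectors shows that, for t ≠ 0, a (t,1,0)-derivation T lies in Ω(g) exactly when the
e₁-coordinate of T e₁ vanishes. For D this coordinate is t ≠ 0, so D ∉ Ω(g), and subtracting a
suitable multiple of D brings any (t,1,0)-derivation into Ω(g): the derivation space is
Ω(g) ⊕ K D.
-/

section General

variable {K V : Type*} [Field K] [AddCommGroup V] [Module K V]

theorem apply_self_eq_zero_of_antisymm [CharZero K] {μ : V →ₗ[K] V →ₗ[K] V}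
    (hanti : ∀ X Y, μ X Y = -μ Y X) (X : V) : μ X X = 0 := by
  have h : (2 : K) • μ X X = 0 := by
    rw [two_smul]
    nth_rw 2 [hanti]
    exact add_neg_cancel _
  exact (smul_eq_zero.mp h).resolve_left two_ne_zero

theorem mem_derivSpace_iff {μ : V →ₗ[K] V →ₗ[K] V} {t : K} {D : V →ₗ[K] V} :
    D ∈ derivSpace μ t ↔ μ.compr₂ (t • D) = μ ∘ₗ D := by
  rw [LinearMap.ext_iff₂]; rfl

theorem mem_omegaSub_iff {μ : V →ₗ[K] V →ₗ[K] V} {T : V →ₗ[K] V} :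
    T ∈ omegaSub μ ↔ μ ∘ₗ T = 0 ∧ derivedSub μ ≤ LinearMap.ker T := by
  rw [LinearMap.ext_iff₂]; rfl

theorem omegaSub_le_derivSpace (μ : V →ₗ[K] V →ₗ[K] V) (t : K) : omegaSub μ ≤ derivSpace μ t := by
  intro T hT X Y
  rw [hT.2 _ (Submodule.subset_span ⟨X, Y, rfl⟩), hT.1, smul_zero]

end General

/-- The Heisenberg bracket on `Fin 3 → K`; the basis e₁, e₂, e₃ of the paper is
`Pi.single 0 1`, `Pi.single 1 1`, `Pi.single 2 1`. -/
def heisenbergBracket (K : Type*) [Field K] :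
    (Fin 3 → K) →ₗ[K] (Fin 3 → K) →ₗ[K] (Fin 3 → K) :=
  LinearMap.mk₂ K (fun X Y => (X 0 * Y 1 - X 1 * Y 0) • Pi.single 2 1)
    (fun _ _ _ => by simp only [Pi.add_apply]; module)
    (fun _ _ _ => by simp only [Pi.smul_apply, smul_eq_mul]; module)
    (fun _ _ _ => by simp only [Pi.add_apply]; module)
    (fun _ _ _ => by simp only [Pi.smul_apply, smul_eq_mul]; module)

namespace heisenbergBracket

variable {K : Type*} [Field K]

@[simp]
theorem apply (X Y : Fin 3 → K) :
    heisenbergBracket K X Y = (X 0 * Y 1 - X 1 * Y 0) • Pi.single 2 1 := rfl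

theorem eq_of_antisymm [CharZero K] {μ : (Fin 3 → K) →ₗ[K] (Fin 3 → K) →ₗ[K] (Fin 3 → K)}
    (hanti : ∀ X Y, μ X Y = -μ Y X) (h01 : μ (Pi.single 0 1) (Pi.single 1 1) = Pi.single 2 1)
    (h02 : μ (Pi.single 0 1) (Pi.single 2 1) = 0) (h12 : μ (Pi.single 1 1) (Pi.single 2 1) = 0) :
    μ = heisenbergBracket K := by
  ext i j : 4
  fin_cases i <;> fin_cases j <;>
    simp [apply_self_eq_zero_of_antisymm hanti, h01, h02, h12, hanti (Pi.single 1 1),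
      hanti (Pi.single 2 1)]

theorem derivedSub_eq : derivedSub (heisenbergBracket K) = K ∙ Pi.single 2 1 := by
  apply le_antisymm
  · rw [derivedSub, Submodule.span_le]
    rintro _ ⟨X, Y, rfl⟩
    exact Submodule.smul_mem _ _ (Submodule.mem_span_singleton_self _)
  · rw [Submodule.span_singleton_le_iff_mem]
    exact Submodule.subset_span ⟨Pi.single 0 1, Pi.single 1 1, by simp⟩

theorem finrank_derivedSub : Module.finrank K (derivedSub (heisenbergBracket K)) = 1 := by
  rw [derivedSub_eq, finrank_span_singleton]
  simp

theorem derivedSub_le_centerSub :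
    derivedSub (heisenbergBracket K) ≤ centerSub (heisenbergBracket K) := by
  rw [derivedSub_eq, Submodule.span_singleton_le_iff_mem]
  intro Y
  simp

theorem mem_omegaSub_iff_of_mem_derivSpace {t : K} (ht : t ≠ 0) {T : (Fin 3 → K) →ₗ[K] (Fin 3 → K)}
    (hT : T ∈ derivSpace (heisenbergBracket K) t) :
    T ∈ omegaSub (heisenbergBracket K) ↔ T (Pi.single 0 1) 0 = 0 := by
  constructor
  · intro h
    simpa using h.1 (Pi.single 0 1) (Pi.single 1 1)
  · intro h0
    -- the pairs (e₁, e₁), (e₂, e₂) kill the off-diagonal coordinates, (e₁, e₂) gives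
    -- t • T e₃ = (T e₁)₁ • e₃ = 0, and then (e₂, e₁) gives (T e₂)₂ = 0
    have h00 := (hT (Pi.single 0 1) (Pi.single 0 1)).symm
    have h11 := (hT (Pi.single 1 1) (Pi.single 1 1)).symm
    have h01 := hT (Pi.single 0 1) (Pi.single 1 1)
    have h10 := hT (Pi.single 1 1) (Pi.single 0 1)
    simp [h0, ht] at h00 h11 h01
    simp [h01] at h10
    rw [mem_omegaSub_iff, derivedSub_eq, Submodule.span_singleton_le_iff_mem]
    refine ⟨?_, h01⟩
    ext i j k
    fin_cases i <;> fin_cases j <;> simp [h0, h00, h11, h10, h01]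

theorem derivSpace_eq_omegaSub_sup {t : K} (ht : t ≠ 0) {D : (Fin 3 → K) →ₗ[K] (Fin 3 → K)}
    (hD : D ∈ derivSpace (heisenbergBracket K) t) (hD0 : D (Pi.single 0 1) 0 ≠ 0) :
    derivSpace (heisenbergBracket K) t = omegaSub (heisenbergBracket K) ⊔ K ∙ D := by
  refine le_antisymm (fun T hT => ?_)
    (sup_le (omegaSub_le_derivSpace _ _) ((Submodule.span_singleton_le_iff_mem _ _).mpr hD))
  set c := T (Pi.single 0 1) 0 / D (Pi.single 0 1) 0
  have hΩ : T - c • D ∈ omegaSub (heisenbergBracket K) := by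
    rw [mem_omegaSub_iff_of_mem_derivSpace ht (sub_mem hT (Submodule.smul_mem _ c hD))]
    simp [c, hD0]
  exact Submodule.mem_sup.mpr
    ⟨_, hΩ, c • D, Submodule.smul_mem _ _ (Submodule.mem_span_singleton_self D), sub_add_cancel _ _⟩

theorem diag_mem_derivSpace {t : K} {D : (Fin 3 → K) →ₗ[K] (Fin 3 → K)}
    (hD0 : D (Pi.single 0 1) = t • Pi.single 0 1) (hD1 : D (Pi.single 1 1) = t • Pi.single 1 1)
    (hD2 : D (Pi.single 2 1) = Pi.single 2 1) : D ∈ derivSpace (heisenbergBracket K) t := by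
  rw [mem_derivSpace_iff]
  ext i j k
  fin_cases i <;> fin_cases j <;> simp [hD0, hD1, hD2]

end heisenbergBracket

theorem stmt_19_general {K : Type*} [Field K] [CharZero K] (t : K) (ht0 : t ≠ 0)
    (μ : (Fin 3 → K) →ₗ[K] (Fin 3 → K) →ₗ[K] (Fin 3 → K))
    (hanti : ∀ X Y : Fin 3 → K, μ X Y = -μ Y X)
    (e : Fin 3 → Fin 3 → K) (he : ∀ i, e i = Pi.single i 1)
    (h12 : μ (e 0) (e 1) = e 2)
    (h13 : μ (e 0) (e 2) = 0) (h23 : μ (e 1) (e 2) = 0)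
    (D : (Fin 3 → K) →ₗ[K] (Fin 3 → K))
    (hD0 : D (e 0) = t • e 0) (hD1 : D (e 1) = t • e 1) (hD2 : D (e 2) = e 2) :
    D ∈ derivSpace μ t ∧ D ∉ omegaSub μ ∧
      Module.finrank K (derivSpace μ t) =
        Module.finrank K (omegaSub μ) +
          Module.finrank K (↥(derivedSub μ) →ₗ[K] ↥(centerSub μ ⊓ derivedSub μ)) := by
  obtain rfl : e = fun i => Pi.single i 1 := funext he
  obtain rfl := heisenbergBracket.eq_of_antisymm hanti h12 h13 h23
  have hD := heisenbergBracket.diag_mem_derivSpace hD0 hD1 hD2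
  have hD00 : D (Pi.single 0 1) 0 ≠ 0 := by simp [hD0, ht0]
  have hDΩ : D ∉ omegaSub (heisenbergBracket K) := by
    rwa [heisenbergBracket.mem_omegaSub_iff_of_mem_derivSpace ht0 hD]
  refine ⟨hD, hDΩ, ?_⟩
  rw [heisenbergBracket.derivSpace_eq_omegaSub_sup ht0 hD hD00,
    Submodule.finrank_sup_span_singleton hDΩ, inf_eq_right.mpr heisenbergBracket.derivedSub_le_centerSub, Module.finrank_linearMap,
    heisenbergBracket.finrank_derivedSub]

theorem stmt_19 {K : Type*} [Field K] [CharZero K] (t : K) (ht0 : t ≠ 0) (ht1 : t ≠ 1)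
    (μ : (Fin 3 → K) →ₗ[K] (Fin 3 → K) →ₗ[K] (Fin 3 → K))
    (hanti : ∀ X Y : Fin 3 → K, μ X Y = -μ Y X)
    (e : Fin 3 → Fin 3 → K) (he : ∀ i, e i = Pi.single i 1)
    (h12 : μ (e 0) (e 1) = e 2)
    (h13 : μ (e 0) (e 2) = 0) (h23 : μ (e 1) (e 2) = 0)
    (D : (Fin 3 → K) →ₗ[K] (Fin 3 → K))
    (hD0 : D (e 0) = t • e 0) (hD1 : D (e 1) = t • e 1) (hD2 : D (e 2) = e 2) :
    D ∈ derivSpace μ t ∧ D ∉ omegaSub μ ∧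
      Module.finrank K (derivSpace μ t) =
        Module.finrank K (omegaSub μ) +
          Module.finrank K (↥(derivedSub μ) →ₗ[K] ↥(centerSub μ ⊓ derivedSub μ)) :=
  stmt_19_general t ht0 μ hanti e he h12 h13 h23 D hD0 hD1 hD2
end
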